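/- If x ≠ y, y does not occur in φ, and bs(φ) denotes φ with every bound occurrence of x replaced by y (renaming the binders), then x is free for y in bs(φ). -/
import Mathlib


inductive Pattern (σ : Type) : Type where
  | evar : ℕ → Pattern σ
  | svar : ℕ → Pattern σ
  | const : σ → Pattern σ
  | app : Pattern σ → Pattern σ → Pattern σ
  | imp : Pattern σ → Pattern σ → Pattern σ
  | ex : ℕ → Pattern σ → Pattern σ
  | mu : ℕ → Pattern σ → Pattern σ

structure AMLStructure (σ : Type) (A : Type) : Type where
  app : A → A → Set A
  interp : σ → Set A

def AMLStructure.sapp {σ A : Type} (S : AMLStructure σ A) (B C : Set A) : Set A :=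
  ⋃ b ∈ B, ⋃ c ∈ C, S.app b c

structure Val (A : Type) : Type where
  e : ℕ → A
  s : ℕ → Set A

def Val.updE {A : Type} (v : Val A) (x : ℕ) (a : A) : Val A :=
  ⟨fun y => if y = x then a else v.e y, v.s⟩

def Val.updS {A : Type} (v : Val A) (X : ℕ) (B : Set A) : Val A :=
  ⟨v.e, fun Y => if Y = X then B else v.s Y⟩

def eval {σ A : Type} (S : AMLStructure σ A) : Pattern σ → Val A → Set A
  | .evar n, v => {v.e n}
  | .svar n, v => v.s n
  | .const c, _ => S.interp c
  | .app φ ψ, v => S.sapp (eval S φ v) (eval S ψ v)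
  | .imp φ ψ, v => (eval S φ v \ eval S ψ v)ᶜ
  | .ex x φ, v => ⋃ a : A, eval S φ (v.updE x a)
  | .mu X φ, v => ⋂₀ {B | eval S φ (v.updS X B) ⊆ B}

def fv {σ : Type} : Pattern σ → Set (ℕ ⊕ ℕ)
  | .evar n => {Sum.inl n}
  | .svar n => {Sum.inr n}
  | .const _ => ∅
  | .app φ ψ => fv φ ∪ fv ψ
  | .imp φ ψ => fv φ ∪ fv ψ
  | .ex x φ => fv φ \ {Sum.inl x}
  | .mu X φ => fv φ \ {Sum.inr X}

def botP {σ : Type} : Pattern σ := .mu 0 (.svar 0)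
def negP {σ : Type} (φ : Pattern σ) : Pattern σ := .imp φ botP
def topP {σ : Type} : Pattern σ := negP botP
def orP {σ : Type} (φ ψ : Pattern σ) : Pattern σ := .imp (negP φ) ψ
def andP {σ : Type} (φ ψ : Pattern σ) : Pattern σ := negP (orP (negP φ) (negP ψ))
def iffP {σ : Type} (φ ψ : Pattern σ) : Pattern σ := andP (.imp φ ψ) (.imp ψ φ)
def allP {σ : Type} (x : ℕ) (φ : Pattern σ) : Pattern σ := negP (.ex x (negP φ))

def substS {σ : Type} (δ : Pattern σ) (X : ℕ) : Pattern σ → Pattern σ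
  | .evar n => .evar n
  | .svar Y => if Y = X then δ else .svar Y
  | .const c => .const c
  | .app φ ψ => .app (substS δ X φ) (substS δ X ψ)
  | .imp φ ψ => .imp (substS δ X φ) (substS δ X ψ)
  | .ex x φ => .ex x (substS δ X φ)
  | .mu Z φ => if Z = X then .mu Z φ else .mu Z (substS δ X φ)

def substE {σ : Type} (δ : Pattern σ) (x : ℕ) : Pattern σ → Pattern σ
  | .evar n => if n = x then δ else .evar n
  | .svar Y => .svar Y
  | .const c => .const c
  | .app φ ψ => .app (substE δ x φ) (substE δ x ψ)
  | .imp φ ψ => .imp (substE δ x φ) (substE δ x ψ)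
  | .ex z φ => if z = x then .ex z φ else .ex z (substE δ x φ)
  | .mu Z φ => .mu Z (substE δ x φ)

def freeForS {σ : Type} (δ : Pattern σ) (X : ℕ) : Pattern σ → Prop
  | .evar _ => True
  | .svar _ => True
  | .const _ => True
  | .app φ ψ => freeForS δ X φ ∧ freeForS δ X ψ
  | .imp φ ψ => freeForS δ X φ ∧ freeForS δ X ψ
  | .ex z φ => (Sum.inr X ∈ fv φ → Sum.inl z ∉ fv δ) ∧ freeForS δ X φ
  | .mu Z φ => Z = X ∨ ((Sum.inr X ∈ fv φ → Sum.inr Z ∉ fv δ) ∧ freeForS δ X φ)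

def freeForE {σ : Type} (δ : Pattern σ) (x : ℕ) : Pattern σ → Prop
  | .evar _ => True
  | .svar _ => True
  | .const _ => True
  | .app φ ψ => freeForE δ x φ ∧ freeForE δ x ψ
  | .imp φ ψ => freeForE δ x φ ∧ freeForE δ x ψ
  | .ex z φ => z = x ∨ ((Sum.inl x ∈ fv φ → Sum.inl z ∉ fv δ) ∧ freeForE δ x φ)
  | .mu Z φ => (Sum.inl x ∈ fv φ → Sum.inr Z ∉ fv δ) ∧ freeForE δ x φ

def subb {σ : Type} (x y : ℕ) : Pattern σ → Pattern σ
  | .evar n => .evar n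
  | .svar Y => .svar Y
  | .const c => .const c
  | .app φ ψ => .app (subb x y φ) (subb x y ψ)
  | .imp φ ψ => .imp (subb x y φ) (subb x y ψ)
  | .ex z φ => if z = x then .ex y (substE (.evar y) x (subb x y φ)) else .ex z (subb x y φ)
  | .mu Z φ => .mu Z (subb x y φ)

def occursE {σ : Type} (y : ℕ) : Pattern σ → Prop
  | .evar n => n = y
  | .svar _ => False
  | .const _ => False
  | .app φ ψ => occursE y φ ∨ occursE y ψ
  | .imp φ ψ => occursE y φ ∨ occursE y ψ
  | .ex z φ => z = y ∨ occursE y φ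
  | .mu _ φ => occursE y φ

mutual
def positiveIn {σ : Type} (X : ℕ) : Pattern σ → Prop
  | .evar _ => True
  | .svar _ => True
  | .const _ => True
  | .app φ ψ => positiveIn X φ ∧ positiveIn X ψ
  | .imp φ ψ => negativeIn X φ ∧ positiveIn X ψ
  | .ex _ φ => positiveIn X φ
  | .mu Z φ => Z = X ∨ positiveIn X φ

def negativeIn {σ : Type} (X : ℕ) : Pattern σ → Prop
  | .evar _ => True
  | .svar Y => Y ≠ X
  | .const _ => True
  | .app φ ψ => negativeIn X φ ∧ negativeIn X ψ
  | .imp φ ψ => positiveIn X φ ∧ negativeIn X ψ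
  | .ex _ φ => negativeIn X φ
  | .mu Z φ => Z = X ∨ negativeIn X φ
end

def nuP {σ : Type} (X : ℕ) (φ : Pattern σ) : Pattern σ :=
  negP (.mu X (negP (substS (negP (.svar X)) X φ)))

inductive Ctx (σ : Type) : Type where
  | hole : Ctx σ
  | appL : Ctx σ → Pattern σ → Ctx σ
  | appR : Pattern σ → Ctx σ → Ctx σ

def Ctx.plug {σ : Type} : Ctx σ → Pattern σ → Pattern σ
  | .hole, δ => δ
  | .appL C ψ, δ => .app (C.plug δ) ψ
  | .appR ψ C, δ => .app ψ (C.plug δ)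


lemma notfree_substE {σ : Type} (x y : ℕ) (hxy : x ≠ y) :
    ∀ θ : Pattern σ, Sum.inl x ∉ fv (substE (Pattern.evar y) x θ) := by
  intro θ
  induction θ with
  | evar n =>
      by_cases h : n = x <;> simp [substE, h, fv]
      · exact hxy
      · exact fun h' => h h'.symm
  | svar n => simp [substE, fv]
  | const c => simp [substE, fv]
  | app φ ψ ih1 ih2 => simp [substE, fv]; exact ⟨ih1, ih2⟩
  | imp φ ψ ih1 ih2 => simp [substE, fv]; exact ⟨ih1, ih2⟩
  | ex z φ ih =>
      by_cases h : z = x <;> simp [substE, h, fv]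
      exact fun hc => absurd hc ih
  | mu Z φ ih => simp [substE, fv]; exact fun hc => absurd hc ih

lemma freeForE_of_notfree {σ : Type} (δ : Pattern σ) (x : ℕ) :
    ∀ θ : Pattern σ, Sum.inl x ∉ fv θ → freeForE δ x θ := by
  intro θ
  induction θ with
  | evar n => intro _; trivial
  | svar n => intro _; trivial
  | const c => intro _; trivial
  | app φ ψ ih1 ih2 => intro h; simp [fv] at h; exact ⟨ih1 h.1, ih2 h.2⟩
  | imp φ ψ ih1 ih2 => intro h; simp [fv] at h; exact ⟨ih1 h.1, ih2 h.2⟩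
  | ex z φ ih =>
      intro h; simp [fv] at h
      by_cases hz : z = x
      · exact Or.inl hz
      · refine Or.inr ⟨fun hc => ?_, ih fun hc => ?_⟩
        · exact absurd (h hc) (fun e => hz e.symm)
        · exact absurd (h hc) (fun e => hz e.symm)
  | mu Z φ ih =>
      intro h; simp [fv] at h
      exact ⟨fun hc => absurd hc h, ih h⟩

theorem freeFor_of_subb {σ : Type} (φ : Pattern σ) (x y : ℕ) (hxy : x ≠ y)
    (hy : ¬ occursE y φ) : freeForE (Pattern.evar y) x (subb x y φ) := by
  induction φ with
  | evar n => trivial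
  | svar n => trivial
  | const c => trivial
  | app φ ψ ih1 ih2 =>
      simp [occursE] at hy
      exact ⟨ih1 hy.1, ih2 hy.2⟩
  | imp φ ψ ih1 ih2 =>
      simp [occursE] at hy
      exact ⟨ih1 hy.1, ih2 hy.2⟩
  | ex z φ ih =>
      simp [occursE] at hy
      by_cases h : z = x
      · simp [subb, h]
        refine Or.inr ⟨fun hc => ?_, ?_⟩
        · exact absurd hc (notfree_substE x y hxy _)
        · exact freeForE_of_notfree _ _ _ (notfree_substE x y hxy _)
      · simp [subb, h]
        refine Or.inr ⟨fun _ => ?_, ih hy.2⟩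
        simp [fv]
        exact hy.1
  | mu Z φ ih =>
      simp [occursE] at hy
      refine ⟨fun _ => ?_, ih hy⟩
      simp [fv]
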